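/- Fractional isoperimetric-type inequality: let n ≥ 1 and s ∈ (0,1). There exists a constant c(n,s) > 0 such that for every measurable set E ⊆ ℝ^n with 0 < |E| < ∞, one has ∫_E ∫_{ℝ^n ∖ E} |x−y|^{−(n+2s)} dy dx ≥ c(n,s) |E|^{(n−2s)/n}. -/

import Mathlib

/-!
For every `x`, the ball `B(x, R)` of volume `2|E|` has at least half of its volume outside `E`,
and on it the kernel `|x - y|^(-p)` is at least `R^(-p)`. So the inner integral is at least
`R^(-p) |E|` and the double integral at least `R^(-p) |E|²`; since `R` is a multiple of
`|E|^(1/n)`, this is a constant times `|E|^(2 - p/n)`, which for `p = n + 2s` is the claim.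
-/

open MeasureTheory ENNReal

noncomputable section

/-- The ambient Euclidean space. -/
abbrev Spc (n : ℕ) := EuclideanSpace ℝ (Fin n)

open Metric Module

theorem measure_le_measure_sdiff_of_two_mul_le {α : Type*} [MeasurableSpace α] {μ : Measure α}
    {s t : Set α} (ht : μ t ≠ ∞) (h : 2 * μ t ≤ μ s) : μ t ≤ μ (s \ t) := by
  have : μ t + μ t ≤ μ t + μ (s \ t) := calc
    μ t + μ t = 2 * μ t := (two_mul _).symm
    _ ≤ μ s := h
    _ ≤ μ (s ∩ t) + μ (s \ t) := measure_le_inter_add_sdiff μ s t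
    _ ≤ μ t + μ (s \ t) := by gcongr; exact Set.inter_subset_right
  exact (ENNReal.add_le_add_iff_left ht).mp this

section MetricSpace

variable {α : Type*} [MetricSpace α] [MeasurableSpace α] [OpensMeasurableSpace α]
  {μ : Measure α} [NullSingletonClass μ] {E : Set α} {p R : ℝ}

theorem ofReal_rpow_mul_le_setLIntegral_compl (hp : 0 ≤ p) (hE : MeasurableSet E)
    (hEfin : μ E ≠ ∞) {x : α} (hball : 2 * μ E ≤ μ (ball x R)) :
    ENNReal.ofReal (R ^ (-p)) * μ E ≤ ∫⁻ y in Eᶜ, ENNReal.ofReal (dist x y ^ (-p)) ∂μ := by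
  have hS : MeasurableSet (ball x R \ E) := measurableSet_ball.diff hE
  have hkernel : ∀ᵐ y ∂μ, y ∈ ball x R \ E →
      ENNReal.ofReal (R ^ (-p)) ≤ ENNReal.ofReal (dist x y ^ (-p)) := by
    filter_upwards [compl_mem_ae_iff.mpr (measure_singleton x)] with y hyx hy
    refine ENNReal.ofReal_le_ofReal (Real.rpow_le_rpow_of_nonpos ?_ ?_ (neg_nonpos.mpr hp))
    · exact dist_pos.mpr (Ne.symm hyx)
    · exact (mem_ball'.mp hy.1).le
  calc ENNReal.ofReal (R ^ (-p)) * μ E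
      ≤ ENNReal.ofReal (R ^ (-p)) * μ (ball x R \ E) :=
        mul_le_mul_right (measure_le_measure_sdiff_of_two_mul_le hEfin hball) _
    _ = ∫⁻ _ in ball x R \ E, ENNReal.ofReal (R ^ (-p)) ∂μ := (setLIntegral_const _ _).symm
    _ ≤ ∫⁻ y in ball x R \ E, ENNReal.ofReal (dist x y ^ (-p)) ∂μ :=
        setLIntegral_mono_ae' hS hkernel
    _ ≤ ∫⁻ y in Eᶜ, ENNReal.ofReal (dist x y ^ (-p)) ∂μ :=
        lintegral_mono_set fun _ hy => hy.2

theorem ofReal_rpow_mul_mul_le_lintegral_lintegral_compl (hp : 0 ≤ p) (hE : MeasurableSet E)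
    (hEfin : μ E ≠ ∞) (hball : ∀ x, 2 * μ E ≤ μ (ball x R)) :
    ENNReal.ofReal (R ^ (-p)) * μ E * μ E ≤
      ∫⁻ x in E, ∫⁻ y in Eᶜ, ENNReal.ofReal (dist x y ^ (-p)) ∂μ ∂μ := calc
  ENNReal.ofReal (R ^ (-p)) * μ E * μ E
      = ∫⁻ _ in E, ENNReal.ofReal (R ^ (-p)) * μ E ∂μ := (setLIntegral_const _ _).symm
  _ ≤ _ := lintegral_mono fun x =>
      ofReal_rpow_mul_le_setLIntegral_compl hp hE hEfin (hball x)

end MetricSpace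

section AddHaar

variable {V : Type*} [NormedAddCommGroup V] [NormedSpace ℝ V] [MeasurableSpace V]
  [FiniteDimensional ℝ V] (μ : Measure V) [μ.IsAddHaarMeasure]

theorem toReal_addHaar_ball_zero_one_pos : 0 < (μ (ball (0 : V) 1)).toReal :=
  ENNReal.toReal_pos (measure_ball_pos μ _ one_pos).ne' measure_ball_lt_top.ne

variable [BorelSpace V] [Nontrivial V]

theorem addHaar_ball_rpow_inv_finrank (x : V) {t : ℝ} (ht : 0 ≤ t) :
    μ (ball x ((t / (μ (ball 0 1)).toReal) ^ (finrank ℝ V : ℝ)⁻¹)) = ENNReal.ofReal t := by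
  have hω := toReal_addHaar_ball_zero_one_pos μ
  have hd : (finrank ℝ V : ℝ) ≠ 0 := by exact_mod_cast finrank_pos.ne'
  rw [Measure.addHaar_ball μ x (by positivity), ← Real.rpow_natCast,
    ← Real.rpow_mul (by positivity), inv_mul_cancel₀ hd, Real.rpow_one]
  conv_lhs => arg 2; rw [← ENNReal.ofReal_toReal measure_ball_lt_top.ne]
  rw [← ENNReal.ofReal_mul (by positivity), div_mul_cancel₀ _ hω.ne']

theorem ofReal_mul_rpow_le_lintegral_lintegral_compl {p : ℝ} (hp : 0 ≤ p) {E : Set V}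
    (hE : MeasurableSet E) (hE₀ : μ E ≠ 0) (hEfin : μ E ≠ ∞) :
    ENNReal.ofReal ((2 / (μ (ball 0 1)).toReal) ^ (-p / finrank ℝ V) *
        (μ E).toReal ^ (2 - p / finrank ℝ V)) ≤
      ∫⁻ x in E, ∫⁻ y in Eᶜ, ENNReal.ofReal (‖x - y‖ ^ (-p)) ∂μ ∂μ := by
  set ω := (μ (ball (0 : V) 1)).toReal
  set d : ℝ := (finrank ℝ V : ℝ)
  set m := (μ E).toReal
  have hω : 0 < ω := toReal_addHaar_ball_zero_one_pos μ
  have hm : 0 < m := ENNReal.toReal_pos hE₀ hEfin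
  set R := (2 * m / ω) ^ d⁻¹
  have hball : ∀ x, 2 * μ E ≤ μ (ball x R) := fun x => by
    rw [addHaar_ball_rpow_inv_finrank μ x (by positivity), ENNReal.ofReal_mul zero_le_two,
      ENNReal.ofReal_toReal hEfin, ENNReal.ofReal_ofNat]
  have hconst : (2 / ω) ^ (-p / d) * m ^ (2 - p / d) = R ^ (-p) * m * m := by
    have hRp : R ^ (-p) = (2 / ω) ^ (-p / d) * m ^ (-p / d) := by
      rw [← Real.rpow_mul (by positivity), mul_div_right_comm, Real.mul_rpow (by positivity) hm.le,
        inv_mul_eq_div]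
    rw [hRp, sub_eq_neg_add, Real.rpow_add hm, Real.rpow_two, neg_div]
    ring
  have := ofReal_rpow_mul_mul_le_lintegral_lintegral_compl hp hE hEfin hball
  simp_rw [dist_eq_norm] at this
  rwa [hconst, ENNReal.ofReal_mul (by positivity), ENNReal.ofReal_mul (by positivity),
    ENNReal.ofReal_toReal hEfin]

end AddHaar

/-- fractional isoperimetric-type inequality:
`∫_E ∫_{ℝ^n∖E} |x-y|^{-(n+2s)} dy dx ≥ c(n,s) |E|^{(n-2s)/n}`. -/
theorem fractional_isoperimetric (n : ℕ) (hn : 1 ≤ n) (s : ℝ) (hs : s ∈ Set.Ioo (0 : ℝ) 1) :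
    ∃ c : ℝ, 0 < c ∧ ∀ E : Set (Spc n), MeasurableSet E →
      0 < volume E → volume E < ⊤ →
      ENNReal.ofReal (c * (volume E).toReal ^ (((n : ℝ) - 2 * s) / n)) ≤
        ∫⁻ x in E, ∫⁻ y in Eᶜ, ENNReal.ofReal (‖x - y‖ ^ (-((n : ℝ) + 2 * s))) := by
  have : Nontrivial (Spc n) := by
    have : Nonempty (Fin n) := ⟨⟨0, hn⟩⟩
    infer_instance
  have hn₀ : (n : ℝ) ≠ 0 := by positivity
  have hexp : ((n : ℝ) - 2 * s) / n = 2 - (n + 2 * s) / n := by field_simp; ring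
  refine ⟨(2 / (volume (ball (0 : Spc n) 1)).toReal) ^ (-((n : ℝ) + 2 * s) / n), ?_,
    fun E hE hE₀ hEfin => ?_⟩
  · have := toReal_addHaar_ball_zero_one_pos (volume : Measure (Spc n))
    positivity
  · have := ofReal_mul_rpow_le_lintegral_lintegral_compl volume (by linarith [hs.1] :
      0 ≤ (n : ℝ) + 2 * s) hE hE₀.ne' hEfin.ne
    rwa [finrank_euclideanSpace_fin, ← hexp] at this
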